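/- arXiv:math/0610873 — 6 statements merged into one kernel-verified Lean document; each statement's English description precedes it below -/
import Mathlib

section
/- Let $z_1,z_2,z_3,z_4$ be integers and define $\psi(z_1,z_2,z_3,z_4)=\max(0,\,z_1,\,z_1+z_2,\,z_1+z_2+3z_4,\,z_1+z_2+z_3+3z_4,\,2z_1+z_2+z_3+3z_4)+2\max(z_3+\max(z_2,0),0)+\max(3z_4,0)-(z_1+z_2+2z_3+3z_4)$. Then $\psi(z_1,z_2,z_3,z_4)\ge 0$, and $\psi(z_1,z_2,z_3,z_4)=0$ if and only if $(z_1,z_2,z_3,z_4)=(0,0,0,0)$. -/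
/-- The function `ψ(z₁,z₂,z₃,z₄)` arising as `⟨c,φ(b)⟩ - l` for elements of the
level-`l` perfect crystal `B_l` for `D₄⁽³⁾`. -/
def psi (z1 z2 z3 z4 : ℤ) : ℤ :=
  max (max (max (max (max 0 z1) (z1 + z2)) (z1 + z2 + 3 * z4))
        (z1 + z2 + z3 + 3 * z4)) (2 * z1 + z2 + z3 + 3 * z4)
    + 2 * max (z3 + max z2 0) 0 + max (3 * z4) 0
    - (z1 + z2 + 2 * z3 + 3 * z4)

/-!
Let `M` be the six-fold maximum in `ψ` and `s = z₁ + z₂ + z₃ + 3z₄` its fifth entry. Then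
`ψ = (M - s) + (2 max (z₃ + max z₂ 0) 0 - z₃) + max (3z₄) 0` is a sum of three nonnegative
terms. The middle one vanishes only for `z₃ = 0, z₂ ≤ 0` and the last one only for `z₄ ≤ 0`;
in that case `M = s = z₁ + z₂ + 3z₄` is at least `z₁`, `0` and `2z₁ + z₂ + 3z₄`, which forces
`z₂ = z₄ = 0` and then `z₁ = 0`.
-/

lemma two_mul_max_add_max_zero_sub_nonneg (a b : ℤ) : 0 ≤ 2 * max (a + max b 0) 0 - a := by
  omega

lemma two_mul_max_add_max_zero_sub_eq_zero_iff (a b : ℤ) :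
    2 * max (a + max b 0) 0 - a = 0 ↔ a = 0 ∧ b ≤ 0 := by
  omega

lemma psi_eq_add (z1 z2 z3 z4 : ℤ) :
    psi z1 z2 z3 z4 =
      (max (max (max (max (max 0 z1) (z1 + z2)) (z1 + z2 + 3 * z4))
          (z1 + z2 + z3 + 3 * z4)) (2 * z1 + z2 + z3 + 3 * z4) - (z1 + z2 + z3 + 3 * z4))
        + (2 * max (z3 + max z2 0) 0 - z3) + max (3 * z4) 0 := by
  unfold psi
  ring

theorem psi_nonneg_and_eq_zero_iff (z1 z2 z3 z4 : ℤ) :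
    0 ≤ psi z1 z2 z3 z4 ∧
      (psi z1 z2 z3 z4 = 0 ↔ z1 = 0 ∧ z2 = 0 ∧ z3 = 0 ∧ z4 = 0) := by
  rw [psi_eq_add]
  have hM : 0 ≤ max (max (max (max (max 0 z1) (z1 + z2)) (z1 + z2 + 3 * z4))
      (z1 + z2 + z3 + 3 * z4)) (2 * z1 + z2 + z3 + 3 * z4) - (z1 + z2 + z3 + 3 * z4) :=
    sub_nonneg.mpr (le_max_of_le_left (le_max_right _ _))
  have hA := two_mul_max_add_max_zero_sub_nonneg z3 z2
  have hB : 0 ≤ max (3 * z4) 0 := le_max_right _ _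
  refine ⟨add_nonneg (add_nonneg hM hA) hB, ?_⟩
  rw [add_eq_zero_iff_of_nonneg (add_nonneg hM hA) hB, add_eq_zero_iff_of_nonneg hM hA,
    two_mul_max_add_max_zero_sub_eq_zero_iff, max_eq_right_iff, sub_eq_zero,
    le_antisymm_iff, and_iff_left (sub_nonneg.mp hM)]
  simp only [max_le_iff]
  omega
end

section
/- For every positive integer $l$, $\sum_{i=0}^{\lfloor l/2\rfloor} \sum_{\substack{i\le j_0,j_1\le l-i \\ j_0\equiv j_1\equiv l-i \pmod 3}} \frac{(1+j_0)(1+j_1)(2+j_0+j_1)}{2} = \frac{(l+1)(l+2)(l+3)^2(l+4)(l+5)}{360}$. -/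
/-!
Writing `x = 1 + j`, the summand is `x₀ x₁ (x₀ + x₁) / 2`, so for fixed `i` the double sum over
the progression `{j ≡ l - i (mod 3), i ≤ j ≤ l - i}` factors as `(∑ x) (∑ x²)`. That progression
has `n = ⌊(l - 2i)/3⌋ + 1` terms and its mean `m = 1 + (l + r)/2`, `r ≡ l + i (mod 3)`, depends
on `i` only through `i mod 3`; the layer is then `n² m (m² + 3 (n² - 1)/4)`. Within a residue
class of `i` mod 3 the number `n` runs through `N, N - 2, N - 4, …`, and the sums of `n²` and
`n⁴` along such a chain are polynomials in `N`. Adding the three classes for each residue of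
`l` mod 6 gives the stated polynomial.
-/

open Finset

theorem sum_range_mul_eq_sum_sum {M : Type*} [AddCommMonoid M] (f : ℕ → M) (d K : ℕ) :
    ∑ i ∈ range (d * K), f i = ∑ t ∈ range d, ∑ u ∈ range K, f (d * u + t) := by
  induction K with
  | zero => simp
  | succ K ih => simp only [Nat.mul_succ, sum_range_add, ih, sum_range_succ, sum_add_distrib]

theorem sum_filter_Icc_mod_eq {M : Type*} [AddCommMonoid M] (f : ℕ → M) {a b : ℕ} (d : ℕ)
    (hab : a ≤ b) :
    ∑ j ∈ (Icc a b).filter (· % d = b % d), f j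
      = ∑ k ∈ range ((b - a) / d + 1), f (b - d * k) := by
  have hstep : ∀ k ∈ range ((b - a) / d + 1), d * k ≤ b - a := fun k hk =>
    (Nat.mul_le_mul_left d (Nat.lt_succ_iff.mp (mem_range.mp hk))).trans (Nat.mul_div_le _ _)
  symm
  refine sum_nbij' (b - d * ·) (fun j => (b - j) / d) ?_ ?_ ?_ ?_ (fun _ _ => rfl)
  · intro k hk
    have hk := hstep k hk
    simp only [mem_filter, mem_Icc]
    refine ⟨⟨by omega, by omega⟩, ?_⟩
    conv_rhs => rw [← Nat.sub_add_cancel (hk.trans (Nat.sub_le b a))]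
    simp
  · intro j hj
    simp only [mem_filter, mem_Icc] at hj
    exact mem_range.mpr (Nat.lt_succ_of_le (Nat.div_le_div_right (by omega)))
  · intro k hk
    rcases Nat.eq_zero_or_pos d with rfl | hd
    · simp only [Nat.div_zero, zero_add, range_one, mem_singleton] at hk
      simp [hk]
    · rw [Nat.sub_sub_self ((hstep k hk).trans (Nat.sub_le b a)), Nat.mul_div_cancel_left _ hd]
  · intro j hj
    simp only [mem_filter, mem_Icc] at hj
    rw [Nat.mul_div_cancel' ((Nat.modEq_iff_dvd' hj.1.2).mp hj.2)]
    omega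

section ArithmeticProgression

variable {K : Type*} [Field K] [CharZero K]

theorem sum_range_add_mul (a d : K) (n : ℕ) :
    ∑ k ∈ range n, (a + d * k) = n * (a + d * (n - 1) / 2) := by
  induction n with
  | zero => simp
  | succ n ih => rw [sum_range_succ, ih]; push_cast; ring

theorem sum_range_add_mul_sq (a d : K) (n : ℕ) :
    ∑ k ∈ range n, (a + d * k) ^ 2
      = n * (a + d * (n - 1) / 2) ^ 2 + d ^ 2 * n * (n ^ 2 - 1) / 12 := by
  induction n with
  | zero => simp
  | succ n ih => rw [sum_range_succ, ih]; push_cast; ring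

end ArithmeticProgression

theorem sum_sum_mul_mul_add_div_two {ι K : Type*} [Field K] [NeZero (2 : K)]
    (s : Finset ι) (x : ι → K) :
    ∑ a ∈ s, ∑ b ∈ s, x a * x b * (x a + x b) / 2 = (∑ a ∈ s, x a) * ∑ a ∈ s, x a ^ 2 := by
  have hsplit : ∀ a b, x a * x b * (x a + x b) / 2 = x a ^ 2 * x b / 2 + x a * x b ^ 2 / 2 :=
    fun a b => by ring
  simp only [hsplit, sum_add_distrib, ← sum_div, ← sum_mul, ← mul_sum]
  rw [mul_comm (∑ a ∈ s, x a ^ 2), add_halves]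

def layerSum (l i : ℕ) : ℚ :=
  ∑ j0 ∈ (Finset.Icc i (l - i)).filter (fun j0 => j0 % 3 = (l - i) % 3),
    ∑ j1 ∈ (Finset.Icc i (l - i)).filter (fun j1 => j1 % 3 = (l - i) % 3),
      ((1 + j0) * (1 + j1) * (2 + j0 + j1) : ℚ) / 2

/-- `(∑ x) (∑ x²)` for a progression `x` with difference `3`, `n` terms and mean `m`. -/
def progSum (m n : ℚ) : ℚ := n ^ 2 * m * (m ^ 2 + 3 * (n ^ 2 - 1) / 4)

/-- `∑ progSum m n` over `n ≡ N (mod 2)`, `0 < n ≤ N`: the chain sums of `n²` and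
`n² (n² - 1)` are `N (N + 1) (N + 2) / 6` and `(N - 1) N (N + 1) (N + 2) (N + 3) / 10`. -/
def progSumParity (m N : ℚ) : ℚ :=
  m ^ 3 * (N * (N + 1) * (N + 2) / 6) + 3 / 40 * m * ((N - 1) * N * (N + 1) * (N + 2) * (N + 3))

-- The truncated subtraction makes the number of terms `0` exactly when `l < 2 * i`.
theorem layerSum_eq (l i : ℕ) :
    layerSum l i = progSum (1 + (l + ((l + i) % 3 : ℕ)) / 2) ((l + 3 - 2 * i) / 3 : ℕ) := by
  rcases le_or_gt (2 * i) l with hi | hi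
  · set n := (l + 3 - 2 * i) / 3
    set P := (Icc i (l - i)).filter (fun j => j % 3 = (l - i) % 3)
    have hlen : (l - i - i) / 3 + 1 = n := by omega
    have hterm : ∀ k ∈ range n,
        ((1 + (l - i - 3 * k : ℕ)) : ℚ) = (1 + (l - i : ℕ)) + (-3) * k := by
      intro k hk
      have : 3 * k ≤ l - i := by have := mem_range.mp hk; omega
      push_cast [Nat.cast_sub this]
      ring
    have hmean : (l : ℚ) + 3 = 2 * i + ((l + i) % 3 : ℕ) + 3 * n := by
      exact_mod_cast (by omega : l + 3 = 2 * i + (l + i) % 3 + 3 * n)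
    calc layerSum l i
        = ∑ j0 ∈ P, ∑ j1 ∈ P, (1 + (j0 : ℚ)) * (1 + j1) * ((1 + j0) + (1 + j1)) / 2 :=
          sum_congr rfl fun _ _ => sum_congr rfl fun _ _ => by ring
      _ = (∑ j ∈ P, (1 + (j : ℚ))) * ∑ j ∈ P, (1 + (j : ℚ)) ^ 2 :=
          sum_sum_mul_mul_add_div_two _ _
      _ = (∑ k ∈ range n, ((1 + (l - i : ℕ)) + (-3) * k : ℚ))
            * ∑ k ∈ range n, ((1 + (l - i : ℕ)) + (-3) * k : ℚ) ^ 2 := by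
          rw [sum_filter_Icc_mod_eq _ 3 (by omega), sum_filter_Icc_mod_eq _ 3 (by omega), hlen]
          exact congr_arg₂ _ (sum_congr rfl hterm)
            (sum_congr rfl fun k hk => by rw [← hterm k hk])
      _ = _ := by
          rw [sum_range_add_mul, sum_range_add_mul_sq, progSum]
          push_cast [Nat.cast_sub (by omega : i ≤ l)]
          have hcenter : 1 + ((l : ℚ) - i) + -3 * ((n : ℚ) - 1) / 2
              = 1 + (l + ((l + i) % 3 : ℕ)) / 2 := by
            linear_combination hmean / 2
          rw [hcenter]
          ring
  · have hn : (l + 3 - 2 * i) / 3 = 0 := by omega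
    have hP : Icc i (l - i) = ∅ := Icc_eq_empty (by omega)
    simp [layerSum, progSum, hn, hP]

theorem sum_range_progSum_sub_two_mul (m : ℚ) {N K : ℕ} (hN : N ≤ 2 * K) :
    ∑ u ∈ range K, progSum m ((N - 2 * u : ℕ) : ℚ) = progSumParity m N := by
  induction K generalizing N with
  | zero =>
    obtain rfl : N = 0 := by omega
    simp [progSumParity]
  | succ K ih =>
    have hshift : ∀ u, N - 2 * (u + 1) = N - 2 - 2 * u := fun u => by omega
    rw [sum_range_succ', Nat.mul_zero, Nat.sub_zero]
    simp only [hshift]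
    rw [ih (by omega)]
    rcases lt_or_ge N 2 with h | h
    · interval_cases N <;> norm_num [progSum, progSumParity]; ring
    · rw [Nat.cast_sub h, progSum, progSumParity, progSumParity]
      ring

theorem sum_layerSum_eq (l : ℕ) :
    ∑ i ∈ range (l / 2 + 1), layerSum l i
      = ∑ t ∈ range 3,
          progSumParity (1 + (l + ((l + t) % 3 : ℕ)) / 2) ((l + 3 - 2 * t) / 3 : ℕ) := by
  have hvanish : ∀ i, l / 2 + 1 ≤ i → layerSum l i = 0 := fun i hi => by
    rw [layerSum_eq, (by omega : (l + 3 - 2 * i) / 3 = 0)]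
    simp [progSum]
  calc ∑ i ∈ range (l / 2 + 1), layerSum l i
      = ∑ i ∈ range (3 * (l + 1)), layerSum l i :=
        sum_subset (range_subset_range.mpr (by omega))
          fun i _ hi => hvanish i (by simpa using hi)
    _ = ∑ t ∈ range 3, ∑ u ∈ range (l + 1), layerSum l (3 * u + t) :=
        sum_range_mul_eq_sum_sum _ _ _
    _ = _ := sum_congr rfl fun t ht => by
        have ht := mem_range.mp ht
        rw [← sum_range_progSum_sub_two_mul _ (by omega : (l + 3 - 2 * t) / 3 ≤ 2 * (l + 1))]
        refine sum_congr rfl fun u _ => ?_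
        rw [layerSum_eq, (by omega : (l + (3 * u + t)) % 3 = (l + t) % 3),
          (by omega : (l + 3 - 2 * (3 * u + t)) / 3 = (l + 3 - 2 * t) / 3 - 2 * u)]

theorem sum_card_A2_crystals_general (l : ℕ) :
    ∑ i ∈ Finset.range (l / 2 + 1),
      ∑ j0 ∈ (Finset.Icc i (l - i)).filter (fun j0 => j0 % 3 = (l - i) % 3),
        ∑ j1 ∈ (Finset.Icc i (l - i)).filter (fun j1 => j1 % 3 = (l - i) % 3),
          ((1 + j0) * (1 + j1) * (2 + j0 + j1) : ℚ) / 2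
      = ((l + 1) * (l + 2) * (l + 3) ^ 2 * (l + 4) * (l + 5) : ℚ) / 360 := by
  change ∑ i ∈ range (l / 2 + 1), layerSum l i = _
  rcases Nat.eq_zero_or_pos l with rfl | hl
  · norm_num [layerSum, filter_singleton]
  obtain ⟨q, s, hs, rfl⟩ : ∃ q s, s < 6 ∧ l = 6 * q + s + 1 :=
    ⟨(l - 1) / 6, (l - 1) % 6, by omega, by omega⟩
  have hN : ∀ t ∈ range 3, (6 * q + s + 1 + 3 - 2 * t) / 3 = 2 * q + (s + 4 - 2 * t) / 3 :=
    fun t ht => by have := mem_range.mp ht; omega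
  have hr : ∀ t, (6 * q + s + 1 + t) % 3 = (s + 1 + t) % 3 := fun t => by omega
  rw [sum_layerSum_eq, sum_congr rfl fun t ht => by rw [hN t ht, hr t]]
  simp only [sum_range_succ, range_zero, sum_empty, zero_add, progSumParity]
  interval_cases s <;> norm_num <;> ring

theorem sum_card_A2_crystals (l : ℕ) (hl : 0 < l) :
    ∑ i ∈ Finset.range (l / 2 + 1),
      ∑ j0 ∈ (Finset.Icc i (l - i)).filter (fun j0 => j0 % 3 = (l - i) % 3),
        ∑ j1 ∈ (Finset.Icc i (l - i)).filter (fun j1 => j1 % 3 = (l - i) % 3),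
          ((1 + j0) * (1 + j1) * (2 + j0 + j1) : ℚ) / 2
      = ((l + 1) * (l + 2) * (l + 3) ^ 2 * (l + 4) * (l + 5) : ℚ) / 360 :=
  sum_card_A2_crystals_general l
end

section
/- For every positive integer $l$, the number of tuples $(x_1,x_2,x_3,\bar x_3,\bar x_2,\bar x_1)$ of nonnegative integers satisfying $x_3\equiv\bar x_3\pmod 2$ and $x_1+x_2+(x_3+\bar x_3)/2+\bar x_2+\bar x_1\le l$ equals $\binom{l+6}{6}+\binom{l+5}{6}=\frac{(l+1)(l+2)(l+3)^2(l+4)(l+5)}{360}$. -/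
/-!
Since `x₃ ≡ x̄₃ (mod 2)`, write `x₃ = 2a + ε` and `x̄₃ = 2b + ε` with a common `ε ∈ {0, 1}`;
then `(x₃ + x̄₃) / 2 = a + b + ε`. The crystal therefore splits into the 6-tuples
`(x₁, x₂, a, b, x̄₂, x̄₁)` of sum `≤ l` (`ε = 0`) and those of sum `< l` (`ε = 1`), which stars and
bars (the hockey-stick identity, by induction on the length) counts as `C(l+6, 6)` and
`C(l+5, 6)`.
-/

open Finset

def sumLeSuccEquiv (k n : ℕ) :
    {x : Fin (k + 1) → ℕ // ∑ i, x i ≤ n} ≃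
      Σ t : Fin (n + 1), {y : Fin k → ℕ // ∑ i, y i ≤ n - t} where
  toFun x := ⟨⟨x.1 0, by have := x.2; rw [Fin.sum_univ_succ] at this; omega⟩,
    ⟨Fin.tail x.1, by have := x.2; rw [Fin.sum_univ_succ] at this; simp only [Fin.tail]; omega⟩⟩
  invFun p := ⟨Fin.cons p.1.1 p.2.1, by
    rw [Fin.sum_univ_succ]; simp only [Fin.cons_zero, Fin.cons_succ]; have := p.2.2; omega⟩
  left_inv x := by simp
  right_inv p := rfl

theorem card_tuple_sum_le (k n : ℕ) :
    Nat.card {x : Fin k → ℕ // ∑ i, x i ≤ n} = (n + k).choose k := by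
  induction k generalizing n with
  | zero =>
    rw [Nat.choose_zero_right, Nat.card_eq_one_iff_unique]
    exact ⟨inferInstance, ⟨⟨finZeroElim, by simp⟩⟩⟩
  | succ k ih =>
    have : ∀ m, Finite {y : Fin k → ℕ // ∑ i, y i ≤ m} := fun m =>
      Nat.finite_of_card_ne_zero (by rw [ih]; exact (Nat.choose_pos (by omega)).ne')
    rw [Nat.card_congr (sumLeSuccEquiv k n), Nat.card_sigma]
    simp only [ih]
    rw [Fin.sum_univ_eq_sum_range (fun t => (n - t + k).choose k), ← sum_range_reflect,
      ← Nat.add_assoc, ← Nat.sum_range_add_choose]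
    refine sum_congr rfl fun t ht => ?_
    rw [mem_range] at ht
    congr 2
    omega

theorem card_tuple_sum_lt (k n : ℕ) :
    Nat.card {x : Fin (k + 1) → ℕ // ∑ i, x i < n} = (n + k).choose (k + 1) := by
  cases n with
  | zero => simp
  | succ n =>
    simp only [Nat.lt_succ_iff, card_tuple_sum_le]
    congr 1
    omega

instance (k n : ℕ) : Finite {x : Fin k → ℕ // ∑ i, x i ≤ n} :=
  Nat.finite_of_card_ne_zero (by rw [card_tuple_sum_le]; exact (Nat.choose_pos le_add_self).ne')

instance (k n : ℕ) : Finite {x : Fin k → ℕ // ∑ i, x i < n} :=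
  Finite.of_injective (Subtype.map (q := fun x : Fin k → ℕ => ∑ i, x i ≤ n) id fun _ => le_of_lt)
    (Subtype.map_injective _ Function.injective_id)

def halve (b : ℕ × ℕ × ℕ × ℕ × ℕ × ℕ) : Fin 6 → ℕ :=
  ![b.1, b.2.1, b.2.2.1 / 2, b.2.2.2.1 / 2, b.2.2.2.2.1, b.2.2.2.2.2]

def unhalve (ε : ℕ) (x : Fin 6 → ℕ) : ℕ × ℕ × ℕ × ℕ × ℕ × ℕ :=
  (x 0, x 1, 2 * x 2 + ε, 2 * x 3 + ε, x 4, x 5)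

theorem sum_halve_add_mod_two {b : ℕ × ℕ × ℕ × ℕ × ℕ × ℕ} (h : b.2.2.1 % 2 = b.2.2.2.1 % 2) :
    ∑ i, halve b i + b.2.2.1 % 2 =
      b.1 + b.2.1 + (b.2.2.1 + b.2.2.2.1) / 2 + b.2.2.2.2.1 + b.2.2.2.2.2 := by
  simp only [halve, Fin.sum_univ_six, Matrix.cons_val_zero, Matrix.cons_val_one, Matrix.cons_val]
  omega

theorem unhalve_halve {b : ℕ × ℕ × ℕ × ℕ × ℕ × ℕ} (h : b.2.2.1 % 2 = b.2.2.2.1 % 2) :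
    unhalve (b.2.2.1 % 2) (halve b) = b := by
  obtain ⟨x₁, x₂, x₃, y₃, y₂, y₁⟩ := b
  simp only [unhalve, halve, Matrix.cons_val_zero, Matrix.cons_val_one, Matrix.cons_val,
    Prod.mk.injEq, true_and, and_true] at h ⊢
  omega

theorem halve_unhalve {ε : ℕ} (hε : ε < 2) (x : Fin 6 → ℕ) : halve (unhalve ε x) = x := by
  ext i
  fin_cases i <;>
    simp only [halve, unhalve, Fin.zero_eta, Fin.mk_one, Fin.reduceFinMk, Matrix.cons_val_zero,
      Matrix.cons_val_one, Matrix.cons_val] <;> omega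

theorem unhalve_mem {ε l : ℕ} {x : Fin 6 → ℕ} (hx : ∑ i, x i + ε ≤ l) :
    let b := unhalve ε x
    b.2.2.1 % 2 = b.2.2.2.1 % 2 ∧
      b.1 + b.2.1 + (b.2.2.1 + b.2.2.2.1) / 2 + b.2.2.2.2.1 + b.2.2.2.2.2 ≤ l := by
  rw [Fin.sum_univ_six] at hx
  simp only [unhalve]
  omega

def crystalParityEquiv (l : ℕ) :
    {b : ℕ × ℕ × ℕ × ℕ × ℕ × ℕ //
        b.2.2.1 % 2 = b.2.2.2.1 % 2 ∧
        b.1 + b.2.1 + (b.2.2.1 + b.2.2.2.1) / 2 + b.2.2.2.2.1 + b.2.2.2.2.2 ≤ l}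
      ≃ {x : Fin 6 → ℕ // ∑ i, x i ≤ l} ⊕ {x : Fin 6 → ℕ // ∑ i, x i < l} where
  toFun b :=
    have := sum_halve_add_mod_two b.2.1
    if h : b.1.2.2.1 % 2 = 0 then .inl ⟨halve b, by omega⟩ else .inr ⟨halve b, by omega⟩
  invFun
    | .inl x => ⟨unhalve 0 x, unhalve_mem x.2⟩
    | .inr x => ⟨unhalve 1 x, unhalve_mem x.2⟩
  left_inv := by
    rintro ⟨b, hpar, -⟩
    rcases Nat.mod_two_eq_zero_or_one b.2.2.1 with h | h <;>
      simp only [h, one_ne_zero, ↓reduceDIte] <;> simp only [← h, unhalve_halve hpar]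
  right_inv := by
    rintro (⟨x, -⟩ | ⟨x, -⟩)
    · dsimp only
      rw [dif_pos (by simp [unhalve])]
      simp only [halve_unhalve two_pos]
    · dsimp only
      rw [dif_neg (by simp [unhalve])]
      simp only [halve_unhalve one_lt_two]

theorem cast_choose_add_five (n : ℕ) :
    ((n + 5).choose 6 : ℚ) = n * (n + 1) * (n + 2) * (n + 3) * (n + 4) * (n + 5) / 720 := by
  have h := Nat.descFactorial_eq_factorial_mul_choose (n + 5) 6
  simp only [Nat.descFactorial_succ, add_tsub_cancel_right, Nat.reduceSubDiff, Nat.add_one_sub_one,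
    tsub_zero, Nat.descFactorial_zero, mul_one, Nat.factorial] at h
  rw [eq_div_iff (by norm_num)]
  qify at h
  linarith

theorem card_B_l_general (l : ℕ) :
    Nat.card {b : ℕ × ℕ × ℕ × ℕ × ℕ × ℕ //
        b.2.2.1 % 2 = b.2.2.2.1 % 2 ∧
        b.1 + b.2.1 + (b.2.2.1 + b.2.2.2.1) / 2 + b.2.2.2.2.1 + b.2.2.2.2.2 ≤ l}
      = Nat.choose (l + 6) 6 + Nat.choose (l + 5) 6 ∧
    ((Nat.choose (l + 6) 6 + Nat.choose (l + 5) 6 : ℚ)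
      = ((l + 1) * (l + 2) * (l + 3) ^ 2 * (l + 4) * (l + 5) : ℚ) / 360) := by
  constructor
  · rw [Nat.card_congr (crystalParityEquiv l), Nat.card_sum, card_tuple_sum_le,
      card_tuple_sum_lt]
  · rw [show l + 6 = l + 1 + 5 from rfl, cast_choose_add_five, cast_choose_add_five]
    push_cast
    ring

/-- The number of elements of the `D₄⁽³⁾` crystal `B_l` in its coordinate
parametrization: tuples `(x₁,x₂,x₃,x̄₃,x̄₂,x̄₁)` of nonnegative integers with
`x₃ ≡ x̄₃ (mod 2)` and `x₁+x₂+(x₃+x̄₃)/2+x̄₂+x̄₁ ≤ l`. -/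
theorem card_B_l (l : ℕ) (hl : 0 < l) :
    Nat.card {b : ℕ × ℕ × ℕ × ℕ × ℕ × ℕ //
        b.2.2.1 % 2 = b.2.2.2.1 % 2 ∧
        b.1 + b.2.1 + (b.2.2.1 + b.2.2.2.1) / 2 + b.2.2.2.2.1 + b.2.2.2.2.2 ≤ l}
      = Nat.choose (l + 6) 6 + Nat.choose (l + 5) 6 ∧
    ((Nat.choose (l + 6) 6 + Nat.choose (l + 5) 6 : ℚ)
      = ((l + 1) * (l + 2) * (l + 3) ^ 2 * (l + 4) * (l + 5) : ℚ) / 360) :=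
  card_B_l_general l
end

section
/- For every nonnegative integer $j$, the number of tuples $(x_1,x_2,x_3,\bar x_3,\bar x_2,\bar x_1)$ of nonnegative integers satisfying $x_3\equiv\bar x_3\pmod 2$ and $x_1+x_2+(x_3+\bar x_3)/2+\bar x_2+\bar x_1 = j$ equals $\binom{j+5}{5}+\binom{j+4}{5}$. -/
open Finset

/-!
Split the tuples by the common parity `r` of `x₃` and `x̄₃`. Writing `x₃ = 2y₃ + r` and
`x̄₃ = 2ȳ₃ + r`, the defining equation becomes `x₁ + x₂ + y₃ + ȳ₃ + x̄₂ + x̄₁ + r = j`, so the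
tuples of parity `r` are the compositions of `j - r` into six parts, of which there are
`C(j - r + 5, 5)` by stars and bars.
-/

theorem card_sum_eq_choose (k n : ℕ) :
    Nat.card {v : Fin (k + 1) → ℕ // ∑ i, v i = n} = (n + k).choose k := by
  rw [← Nat.card_congr (Sym.equivNatSumOfFintype (Fin (k + 1)) n), Nat.card_eq_fintype_card,
    Sym.card_sym_eq_choose, Fintype.card_fin, show k + 1 + n - 1 = n + k by omega,
    Nat.choose_symm_add]

/-- At least two parts are needed: for one part the right side is `1` at `n = 0`. -/
theorem card_sum_add_one_eq_choose (k n : ℕ) :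
    Nat.card {v : Fin (k + 2) → ℕ // ∑ i, v i + 1 = n} = (n + k).choose (k + 1) := by
  cases n with
  | zero =>
    have : IsEmpty {v : Fin (k + 2) → ℕ // ∑ i, v i + 1 = 0} := ⟨fun v => by omega⟩
    rw [Nat.card_of_isEmpty, Nat.choose_eq_zero_of_lt (by omega)]
  | succ n =>
    rw [Nat.card_congr (Equiv.subtypeEquivRight fun v => Nat.add_right_cancel_iff),
      card_sum_eq_choose, show n + 1 + k = n + (k + 1) by omega]

instance (k r n : ℕ) : Finite {v : Fin k → ℕ // ∑ i, v i + r = n} :=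
  Set.Finite.to_subtype <| (Set.finite_Iic fun _ => n).subset fun v (hv : _ = n) i =>
    show v i ≤ n from (single_le_sum (fun i _ => Nat.zero_le (v i)) (mem_univ i)).trans (by omega)

def crystalG2Equiv (j : ℕ) :
    {b : ℕ × ℕ × ℕ × ℕ × ℕ × ℕ // b.2.2.1 % 2 = b.2.2.2.1 % 2 ∧
        b.1 + b.2.1 + (b.2.2.1 + b.2.2.2.1) / 2 + b.2.2.2.2.1 + b.2.2.2.2.2 = j}
      ≃ Σ r : Fin 2, {v : Fin 6 → ℕ // ∑ i, v i + r = j} where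
  toFun b := ⟨⟨b.1.2.2.1 % 2, Nat.mod_lt _ two_pos⟩,
    ![b.1.1, b.1.2.1, b.1.2.2.1 / 2, b.1.2.2.2.1 / 2, b.1.2.2.2.2.1, b.1.2.2.2.2.2], by
      simp only [Fin.sum_univ_six, Matrix.cons_val_zero, Matrix.cons_val_one, Matrix.cons_val]
      omega⟩
  invFun v := ⟨(v.2.1 0, v.2.1 1, 2 * v.2.1 2 + v.1, 2 * v.2.1 3 + v.1, v.2.1 4, v.2.1 5), by
      have := v.2.2
      simp only [Fin.sum_univ_six] at this
      dsimp only
      constructor <;> omega⟩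
  left_inv b := by
    obtain ⟨⟨x₁, x₂, x₃, y₃, y₂, y₁⟩, hpar, hsum⟩ := b
    dsimp only at hpar hsum
    ext <;> simp only [Matrix.cons_val_zero, Matrix.cons_val_one, Matrix.cons_val] <;> omega
  right_inv v := by
    obtain ⟨r, v, hv⟩ := v
    refine Sigma.subtype_ext (Fin.ext (by dsimp only; omega)) ?_
    ext i
    fin_cases i <;>
      simp only [Fin.zero_eta, Fin.mk_one, Fin.reduceFinMk, Matrix.cons_val_zero,
        Matrix.cons_val_one, Matrix.cons_val] <;> omega

/-- The number of elements of the `G₂` crystal `B^{G₂}(jΛ̄₁)` in its coordinate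
parametrization: tuples `(x₁,x₂,x₃,x̄₃,x̄₂,x̄₁)` of nonnegative integers with
`x₃ ≡ x̄₃ (mod 2)` and `x₁+x₂+(x₃+x̄₃)/2+x̄₂+x̄₁ = j`. -/
theorem card_BG2 (j : ℕ) :
    Nat.card {b : ℕ × ℕ × ℕ × ℕ × ℕ × ℕ //
        b.2.2.1 % 2 = b.2.2.2.1 % 2 ∧
        b.1 + b.2.1 + (b.2.2.1 + b.2.2.2.1) / 2 + b.2.2.2.2.1 + b.2.2.2.2.2 = j}
      = Nat.choose (j + 5) 5 + Nat.choose (j + 4) 5 := by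
  rw [Nat.card_congr (crystalG2Equiv j), Nat.card_sigma, Fin.sum_univ_two]
  simp only [Fin.val_zero, Fin.val_one, add_zero]
  rw [card_sum_eq_choose 5, card_sum_add_one_eq_choose 4]
end

section
/- In the $A_2$ crystal $B^{A_2}(j_0\Lambda_0+j_1\Lambda_1)$ parametrized by $t(p,q,r)$ with $0\le p\le j_0$, $p\le q\le j_1+p$, $0\le r\le j_0-2p+q$ and crystal operators given by the explicit case rules (\ref{A2 e0})–(\ref{A2 f1}), the lowest weight vector (the unique element killed by all $\tilde f_i$, $i=0,1$) is $t(j_0,j_0+j_1,j_1)$, and for all admissible $(p,q,r)$ one has $t(p,q,r)=\tilde e_0^{r'}\tilde e_1^{q'}\tilde e_0^{p'}\,t(j_0,j_0+j_1,j_1)$, where $p'=j_1-q+p$, $q'=j_0+j_1-q$, $r'=j_0+q-2p-r$. -/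
/-!
On `TA j₀ j₁`, both `f̃₀` and `f̃₁` vanish at `t(p,q,r)` exactly when `r = j₀ + q - 2p` and
`q ≥ max (p + r) (j₁ + p)`; then `p + r ≤ q` forces `p = j₀`, hence `q = j₀ + j₁` and `r = j₁`.
Conversely, from `t(j₀, j₀+j₁, j₁)` the operator `ẽ₀` lowers `r` to `q - p`, then `ẽ₁` first
lowers `q` alone (while `p + r < q`) and afterwards lowers `p` and `q` together while raising
`r`, reaching `t(p, q, j₀+q-2p)`, and a last run of `ẽ₀` lowers `r` to its target value.
-/

/-- The parametrizing set of the `A₂` crystal `B^{A₂}(j₀Λ₀+j₁Λ₁)`: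
`t(p,q,r)` with `0 ≤ p ≤ j₀`, `p ≤ q ≤ j₁+p`, `0 ≤ r ≤ j₀-2p+q`. -/
def TA (j0 j1 : ℕ) : Set (ℕ × ℕ × ℕ) :=
  {x | x.1 ≤ j0 ∧ x.1 ≤ x.2.1 ∧ x.2.1 ≤ j1 + x.1 ∧ x.2.2 + 2 * x.1 ≤ j0 + x.2.1}

def e0A : ℕ × ℕ × ℕ → Option (ℕ × ℕ × ℕ)
  | (p, q, r) => if 0 < r then some (p, q, r - 1) else none

def f0A (j0 : ℕ) : ℕ × ℕ × ℕ → Option (ℕ × ℕ × ℕ)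
  | (p, q, r) => if r + 2 * p < j0 + q then some (p, q, r + 1) else none

def e1A : ℕ × ℕ × ℕ → Option (ℕ × ℕ × ℕ)
  | (p, q, r) =>
    if 0 < p ∧ q ≤ p + r then some (p - 1, q - 1, r + 1)
    else if p + r < q then some (p, q - 1, r)
    else none

def f1A (j1 : ℕ) : ℕ × ℕ × ℕ → Option (ℕ × ℕ × ℕ)
  | (p, q, r) =>
    if p ≤ q ∧ q < p + r then some (p + 1, q + 1, r - 1)
    else if p + r ≤ q ∧ q < j1 + p then some (p, q + 1, r)
    else none

theorem Option.iterate_bind_some_of_chain {α : Type*} (f : α → Option α) (x : ℕ → α) (k : ℕ)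
    (h : ∀ i < k, f (x i) = some (x (i + 1))) :
    (fun o => Option.bind o f)^[k] (some (x 0)) = some (x k) := by
  induction k with
  | zero => rfl
  | succ k ih =>
    rw [Function.iterate_succ_apply', ih fun i hi => h i (by omega)]
    exact h k k.lt_succ_self

theorem f0A_eq_none_iff {j0 p q r : ℕ} : f0A j0 (p, q, r) = none ↔ j0 + q ≤ r + 2 * p := by
  simp only [f0A, ite_eq_right_iff, reduceCtorEq, imp_false, not_lt]

theorem f1A_eq_none_iff {j1 p q r : ℕ} (hpq : p ≤ q) :
    f1A j1 (p, q, r) = none ↔ p + r ≤ q ∧ j1 + p ≤ q := by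
  simp only [f1A]
  split_ifs <;> simp only [false_iff, true_iff] <;> omega

theorem e0A_iterate {p q r r' k : ℕ} (h : r' + k = r) :
    (fun o => Option.bind o e0A)^[k] (some (p, q, r)) = some (p, q, r') := by
  have := Option.iterate_bind_some_of_chain e0A (fun i => (p, q, r - i)) k fun i hi => by
    simp only [e0A, if_pos (show 0 < r - i by omega), Nat.sub_add_eq]
  simpa [show r - k = r' by omega] using this

theorem e1A_iterate_of_add_le {p q q' r k : ℕ} (hq : q' + k = q) (h : p + r ≤ q') :
    (fun o => Option.bind o e1A)^[k] (some (p, q, r)) = some (p, q', r) := by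
  have := Option.iterate_bind_some_of_chain e1A (fun i => (p, q - i, r)) k fun i hi => by
    simp only [e1A, if_neg (show ¬(0 < p ∧ q - i ≤ p + r) by omega),
      if_pos (show p + r < q - i by omega), Nat.sub_add_eq]
  simpa [show q - k = q' by omega] using this

theorem e1A_iterate_of_le_add {p p' q q' r k : ℕ} (hp : p' + k = p) (hq : q' + k = q)
    (h : q ≤ p + r) :
    (fun o => Option.bind o e1A)^[k] (some (p, q, r)) = some (p', q', r + k) := by
  have := Option.iterate_bind_some_of_chain e1A (fun i => (p - i, q - i, r + i)) k fun i hi => by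
    simp only [e1A, if_pos (show 0 < p - i ∧ q - i ≤ p - i + (r + i) by omega), Nat.sub_add_eq,
      Nat.add_assoc]
  simpa [show p - k = p' by omega, show q - k = q' by omega] using this

theorem iterate_e0A_e1A_e0A_lowest {j0 j1 p q r : ℕ} (hx : (p, q, r) ∈ TA j0 j1) :
    (fun o => Option.bind o e0A)^[j0 + q - 2 * p - r]
      ((fun o => Option.bind o e1A)^[j0 + j1 - q]
        ((fun o => Option.bind o e0A)^[j1 + p - q] (some (j0, j0 + j1, j1))))
      = some (p, q, r) := by
  obtain ⟨hp, hpq, hq, hr⟩ := hx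
  dsimp only at hp hpq hq hr
  rw [show j0 + j1 - q = (j0 - p) + (j1 + p - q) by omega, Function.iterate_add_apply,
    e0A_iterate (r' := q - p) (by omega),
    e1A_iterate_of_add_le (q' := j0 + q - p) (by omega) (by omega),
    e1A_iterate_of_le_add (p' := p) (q' := q) (by omega) (by omega) (by omega),
    e0A_iterate (r' := r) (by omega)]

/-- The lowest weight vector of `B^{A₂}(j₀Λ₀+j₁Λ₁)` is `t(j₀,j₀+j₁,j₁)`, and every
element `t(p,q,r)` equals `ẽ₀^{r'} ẽ₁^{q'} ẽ₀^{p'} t(j₀,j₀+j₁,j₁)` with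
`p' = j₁-q+p`, `q' = j₀+j₁-q`, `r' = j₀+q-2p-r`. -/
theorem A2_lowest_weight (j0 j1 : ℕ) :
    (j0, j0 + j1, j1) ∈ TA j0 j1 ∧
    f0A j0 (j0, j0 + j1, j1) = none ∧ f1A j1 (j0, j0 + j1, j1) = none ∧
    (∀ x ∈ TA j0 j1, f0A j0 x = none → f1A j1 x = none → x = (j0, j0 + j1, j1)) ∧
    (∀ p q r : ℕ, (p, q, r) ∈ TA j0 j1 →
      (fun o => Option.bind o e0A)^[j0 + q - 2 * p - r]
        ((fun o => Option.bind o e1A)^[j0 + j1 - q]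
          ((fun o => Option.bind o e0A)^[j1 + p - q] (some (j0, j0 + j1, j1))))
        = some (p, q, r)) := by
  refine ⟨?_, f0A_eq_none_iff.2 (by omega), (f1A_eq_none_iff (by omega)).2 (by omega), ?_,
    fun p q r => iterate_e0A_e1A_e0A_lowest⟩
  · simp only [TA, Set.mem_ofPred_eq]; omega
  · rintro ⟨p, q, r⟩ ⟨hp, hpq, hq, hr⟩ hf0 hf1
    dsimp only at hp hpq hq hr
    rw [f0A_eq_none_iff] at hf0
    rw [f1A_eq_none_iff hpq] at hf1
    simp only [Prod.mk.injEq]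
    omega
end

section
/- In the crystal $T(j_0,j_1)$ with operators as specified, for all admissible $(p,q,r)$ and $i\in\{0,1\}$: $\tilde f_i t(p,q,r)=t(p',q',r')$ implies $\tilde e_i t(p',q',r')=t(p,q,r)$, and conversely $\tilde e_i t(p,q,r)=t(p',q',r')$ implies $\tilde f_i t(p',q',r')=t(p,q,r)$. -/
/-!
Each of `f̃ᵢ`, `ẽᵢ` is a piecewise translation of `ℕ³`. Composing `ẽᵢ` after `f̃ᵢ` needs no
hypothesis: the branch of `f̃ᵢ` taken at `x` forces the matching branch of `ẽᵢ` at its image.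
The converse composition uses the inequalities cutting out `T(j₀, j₁)`: `r + 2p ≤ j₀ + q` lets
`f̃₀` undo `ẽ₀`, and `p ≤ q ≤ j₁ + p` lets `f̃₁` undo both branches of `ẽ₁`.
-/

theorem e0A_eq_some_of_f0A_eq_some {j0 : ℕ} {x y : ℕ × ℕ × ℕ} (h : f0A j0 x = some y) :
    e0A y = some x := by
  obtain ⟨p, q, r⟩ := x
  simp only [f0A, Option.ite_none_right_eq_some, Option.some.injEq] at h
  obtain ⟨-, rfl⟩ := h
  simp [e0A]

theorem f0A_eq_some_of_e0A_eq_some {j0 p q r : ℕ} (hr : r + 2 * p ≤ j0 + q)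
    {y : ℕ × ℕ × ℕ} (h : e0A (p, q, r) = some y) : f0A j0 y = some (p, q, r) := by
  simp only [e0A, Option.ite_none_right_eq_some, Option.some.injEq] at h
  obtain ⟨hr0, rfl⟩ := h
  simp only [f0A, Option.ite_none_right_eq_some, Option.some.injEq, Prod.mk.injEq, true_and]
  omega

theorem e1A_eq_some_of_f1A_eq_some {j1 : ℕ} {x y : ℕ × ℕ × ℕ} (h : f1A j1 x = some y) :
    e1A y = some x := by
  obtain ⟨p, q, r⟩ := x
  simp only [f1A] at h
  split_ifs at h with hraise hshift <;> cases h
  · rw [e1A, if_pos (by omega)]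
    simp only [Option.some.injEq, Prod.mk.injEq]
    omega
  · rw [e1A, if_neg (by omega), if_pos (by omega)]
    simp only [Option.some.injEq, Prod.mk.injEq, true_and, and_true]
    omega

theorem f1A_eq_some_of_e1A_eq_some {j1 p q r : ℕ} (hpq : p ≤ q) (hq : q ≤ j1 + p)
    {y : ℕ × ℕ × ℕ} (h : e1A (p, q, r) = some y) : f1A j1 y = some (p, q, r) := by
  simp only [e1A] at h
  split_ifs at h with hlower hshift <;> cases h
  · rw [f1A, if_pos (by omega)]
    simp only [Option.some.injEq, Prod.mk.injEq]
    omega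
  · rw [f1A, if_neg (by omega), if_pos (by omega)]
    simp only [Option.some.injEq, Prod.mk.injEq, true_and, and_true]
    omega

/-- On the `A₂` crystal, `f̃ᵢ x = y` iff `ẽᵢ y = x` (for `i = 0, 1`). -/
theorem A2_ef_inverse (j0 j1 : ℕ) (x : ℕ × ℕ × ℕ) (hx : x ∈ TA j0 j1) :
    (∀ y, f0A j0 x = some y → e0A y = some x) ∧
    (∀ y, e0A x = some y → f0A j0 y = some x) ∧
    (∀ y, f1A j1 x = some y → e1A y = some x) ∧
    (∀ y, e1A x = some y → f1A j1 y = some x) := by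
  obtain ⟨p, q, r⟩ := x
  obtain ⟨-, hpq, hq, hr⟩ := hx
  exact ⟨fun _ => e0A_eq_some_of_f0A_eq_some, fun _ => f0A_eq_some_of_e0A_eq_some hr,
    fun _ => e1A_eq_some_of_f1A_eq_some, fun _ => f1A_eq_some_of_e1A_eq_some hpq hq⟩
end
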